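/- For every k ≥ 0, the function s ↦ V_k(log s) is convex on (0, ∞). -/
import Mathlib


open MeasureTheory

open MeasureTheory

/-- The recursively defined value functions for the Canadised American put:
`V_0(x) = (K − e^x)⁺` and `V_k(x) = max{(K − e^x)⁺, e^{−r/n} E[V_{k−1}(x + Y)]}`. -/
noncomputable def putV {Ω : Type*} [MeasurableSpace Ω] (P : Measure Ω) (Y : Ω → ℝ)
    (K r : ℝ) (n : ℕ) : ℕ → ℝ → ℝ
  | 0 => fun x => max (K - Real.exp x) 0
  | k + 1 => fun x =>
      max (max (K - Real.exp x) 0)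
        (Real.exp (-(r / n)) * ∫ ω, putV P Y K r n k (x + Y ω) ∂P)

section Aux

variable {Ω : Type*} [MeasurableSpace Ω] (P : Measure Ω) [IsProbabilityMeasure P]
  (K r : ℝ) (n : ℕ) (Y : Ω → ℝ)

lemma putV_nonneg (k : ℕ) (x : ℝ) : 0 ≤ putV P Y K r n k x := by
  cases k with
  | zero => exact le_max_right _ _
  | succ k => exact le_trans (le_max_right _ _) (le_max_left _ _)

lemma exp_neg_le_one (hr : 0 ≤ r) : Real.exp (-(r / n)) ≤ 1 := by
  rw [Real.exp_le_one_iff]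
  exact neg_nonpos.mpr (by positivity)

lemma putV_le (hK : 0 ≤ K) (hr : 0 ≤ r) (k : ℕ) (x : ℝ) :
    putV P Y K r n k x ≤ K := by
  induction k generalizing x with
  | zero =>
    apply max_le _ hK
    have := Real.exp_pos x; linarith
  | succ k ih =>
    apply max_le
    · apply max_le _ hK
      have := Real.exp_pos x; linarith
    · calc Real.exp (-(r / n)) * ∫ ω, putV P Y K r n k (x + Y ω) ∂P
          ≤ 1 * ∫ ω, putV P Y K r n k (x + Y ω) ∂P := by
            apply mul_le_mul_of_nonneg_right (exp_neg_le_one r n hr)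
            exact integral_nonneg fun ω => putV_nonneg P K r n Y k _
        _ ≤ 1 * K := by
            rw [one_mul, one_mul]
            calc ∫ ω, putV P Y K r n k (x + Y ω) ∂P
                ≤ ∫ _ω, K ∂P := by
                  apply integral_mono_of_nonneg
                  · exact Filter.Eventually.of_forall fun ω => putV_nonneg P K r n Y k _
                  · exact integrable_const K
                  · exact Filter.Eventually.of_forall fun ω => ih _
              _ = K := by simp
        _ = K := one_mul K

lemma putV_continuous (hY : Measurable Y) (hK : 0 ≤ K) (hr : 0 ≤ r) (k : ℕ) :
    Continuous (putV P Y K r n k) := by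
  induction k with
  | zero =>
    exact (continuous_const.sub Real.continuous_exp).max continuous_const
  | succ k ih =>
    refine Continuous.max ((continuous_const.sub Real.continuous_exp).max continuous_const) ?_
    refine continuous_const.mul ?_
    apply continuous_of_dominated (bound := fun _ => K)
    · intro x
      exact ((ih.measurable.comp ((measurable_const.add hY))).aestronglyMeasurable)
    · intro x
      refine Filter.Eventually.of_forall fun ω => ?_
      rw [Real.norm_eq_abs, abs_le]
      exact ⟨by linarith [putV_nonneg P K r n Y k (x + Y ω)],
        putV_le P K r n Y hK hr k _⟩
    · exact integrable_const K
    · exact Filter.Eventually.of_forall fun ω =>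
        ih.comp (continuous_id.add continuous_const)

lemma putV_integrable (hY : Measurable Y) (hK : 0 ≤ K) (hr : 0 ≤ r) (k : ℕ) (x : ℝ) :
    Integrable (fun ω => putV P Y K r n k (x + Y ω)) P := by
  refine Integrable.mono' (integrable_const K)
    (((putV_continuous P K r n Y hY hK hr k).measurable.comp
      (measurable_const.add hY)).aestronglyMeasurable) ?_
  refine Filter.Eventually.of_forall fun ω => ?_
  rw [Real.norm_eq_abs, abs_le]
  exact ⟨by linarith [putV_nonneg P K r n Y k (x + Y ω)], putV_le P K r n Y hK hr k _⟩

end Aux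

/-- for every `k ≥ 0`, the function `s ↦ V_k(log s)` is convex
on `(0,∞)`. -/
theorem statement18 {Ω : Type*} [MeasurableSpace Ω] (P : Measure Ω) [IsProbabilityMeasure P]
    (K r : ℝ) (hK : 0 < K) (hr : 0 < r) (n : ℕ) (hn : 1 ≤ n)
    (Y : Ω → ℝ) (hY : Measurable Y) :
    ∀ k : ℕ, ConvexOn ℝ (Set.Ioi 0) (fun s : ℝ => putV P Y K r n k (Real.log s)) := by
  have hK' : (0:ℝ) ≤ K := hK.le
  have hr' : (0:ℝ) ≤ r := hr.le
  intro k
  induction k with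
  | zero =>
    refine ⟨convex_Ioi 0, ?_⟩
    intro x hx y hy a b ha hb hab
    have hxy : a • x + b • y ∈ Set.Ioi (0:ℝ) := (convex_Ioi 0) hx hy ha hb hab
    simp only [putV, smul_eq_mul] at *
    rw [Real.exp_log hxy, Real.exp_log hx, Real.exp_log hy]
    apply max_le
    · have : K - (a * x + b * y) = a * (K - x) + b * (K - y) := by nlinarith
      rw [this]
      exact add_le_add (mul_le_mul_of_nonneg_left (le_max_left _ _) ha)
        (mul_le_mul_of_nonneg_left (le_max_left _ _) hb)
    · have h1 : (0:ℝ) ≤ a * max (K - x) 0 := mul_nonneg ha (le_max_right _ _)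
      have h2 : (0:ℝ) ≤ b * max (K - y) 0 := mul_nonneg hb (le_max_right _ _)
      linarith
  | succ k ih =>
    refine ⟨convex_Ioi 0, ?_⟩
    intro x hx y hy a b ha hb hab
    have hxy : a • x + b • y ∈ Set.Ioi (0:ℝ) := (convex_Ioi 0) hx hy ha hb hab
    simp only [smul_eq_mul] at hxy ⊢
    have hx0 : (0:ℝ) < x := hx
    have hy0 : (0:ℝ) < y := hy
    have hxy0 : (0:ℝ) < a * x + b * y := hxy
    -- pointwise convexity inside the integral
    have hpt : ∀ ω, putV P Y K r n k (Real.log (a * x + b * y) + Y ω)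
        ≤ a * putV P Y K r n k (Real.log x + Y ω)
          + b * putV P Y K r n k (Real.log y + Y ω) := by
      intro ω
      set t := Y ω
      have het : (0:ℝ) < Real.exp t := Real.exp_pos t
      have hxu : x * Real.exp t ∈ Set.Ioi (0:ℝ) := mul_pos hx0 het
      have hyu : y * Real.exp t ∈ Set.Ioi (0:ℝ) := mul_pos hy0 het
      have := ih.2 hxu hyu ha hb hab
      simp only [smul_eq_mul] at this
      have e1 : a * (x * Real.exp t) + b * (y * Real.exp t)
          = (a * x + b * y) * Real.exp t := by ring
      rw [e1, Real.log_mul hxy0.ne' het.ne', Real.log_exp,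
        Real.log_mul hx0.ne' het.ne', Real.log_exp,
        Real.log_mul hy0.ne' het.ne', Real.log_exp] at this
      exact this
    have iX := putV_integrable P K r n Y hY hK' hr' k (Real.log x)
    have iY := putV_integrable P K r n Y hY hK' hr' k (Real.log y)
    have iZ := putV_integrable P K r n Y hY hK' hr' k (Real.log (a * x + b * y))
    have hint : ∫ ω, putV P Y K r n k (Real.log (a * x + b * y) + Y ω) ∂P
        ≤ a * ∫ ω, putV P Y K r n k (Real.log x + Y ω) ∂P
          + b * ∫ ω, putV P Y K r n k (Real.log y + Y ω) ∂P := by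
      calc ∫ ω, putV P Y K r n k (Real.log (a * x + b * y) + Y ω) ∂P
          ≤ ∫ ω, (a * putV P Y K r n k (Real.log x + Y ω)
              + b * putV P Y K r n k (Real.log y + Y ω)) ∂P :=
            integral_mono iZ ((iX.const_mul a).add (iY.const_mul b)) hpt
        _ = a * ∫ ω, putV P Y K r n k (Real.log x + Y ω) ∂P
              + b * ∫ ω, putV P Y K r n k (Real.log y + Y ω) ∂P := by
            rw [integral_add (iX.const_mul a) (iY.const_mul b),
              MeasureTheory.integral_const_mul, MeasureTheory.integral_const_mul]
    show putV P Y K r n (k+1) (Real.log (a * x + b * y))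
        ≤ a * putV P Y K r n (k+1) (Real.log x) + b * putV P Y K r n (k+1) (Real.log y)
    simp only [putV]
    rw [Real.exp_log hxy0, Real.exp_log hx0, Real.exp_log hy0]
    set c := Real.exp (-(r / n)) with hc
    have hc0 : (0:ℝ) ≤ c := (Real.exp_pos _).le
    apply max_le
    · -- payoff part
      have hstep : max (K - (a * x + b * y)) 0 ≤ a * max (K - x) 0 + b * max (K - y) 0 := by
        apply max_le
        · have : K - (a * x + b * y) = a * (K - x) + b * (K - y) := by nlinarith
          rw [this]
          exact add_le_add (mul_le_mul_of_nonneg_left (le_max_left _ _) ha)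
            (mul_le_mul_of_nonneg_left (le_max_left _ _) hb)
        · have h1 : (0:ℝ) ≤ a * max (K - x) 0 := mul_nonneg ha (le_max_right _ _)
          have h2 : (0:ℝ) ≤ b * max (K - y) 0 := mul_nonneg hb (le_max_right _ _)
          linarith
      refine hstep.trans ?_
      exact add_le_add (mul_le_mul_of_nonneg_left (le_max_left _ _) ha)
        (mul_le_mul_of_nonneg_left (le_max_left _ _) hb)
    · -- continuation part
      have hstep : c * ∫ ω, putV P Y K r n k (Real.log (a * x + b * y) + Y ω) ∂P
          ≤ a * (c * ∫ ω, putV P Y K r n k (Real.log x + Y ω) ∂P)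
            + b * (c * ∫ ω, putV P Y K r n k (Real.log y + Y ω) ∂P) := by
        have := mul_le_mul_of_nonneg_left hint hc0
        calc c * ∫ ω, putV P Y K r n k (Real.log (a * x + b * y) + Y ω) ∂P
            ≤ c * (a * ∫ ω, putV P Y K r n k (Real.log x + Y ω) ∂P
                + b * ∫ ω, putV P Y K r n k (Real.log y + Y ω) ∂P) := this
          _ = a * (c * ∫ ω, putV P Y K r n k (Real.log x + Y ω) ∂P)
                + b * (c * ∫ ω, putV P Y K r n k (Real.log y + Y ω) ∂P) := by ring
      refine hstep.trans ?_
      exact add_le_add (mul_le_mul_of_nonneg_left (le_max_right _ _) ha)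
        (mul_le_mul_of_nonneg_left (le_max_right _ _) hb)
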